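/- Let a ≥ 0, c′ ≥ 0, H₁ ≥ 0, H₂ ≥ 0, λ̂ > λ > 0, γ > β > 0, and t_k ≥ 0, define H₃ = c′·(H₁·exp((λ−λ̂)·t_k)/(a+λ̂) + H₂/(a+λ)), and set ε = ln((γ + H₃)/(β + H₃))/(a + λ̂). Let ẽ : ℝ → ℝⁿ be differentiable on [t_k, t_k + ε] with ‖ẽ(t_k)‖ ≤ β·exp(−λ·t_k) and ‖ẽ′(t)‖ ≤ a·‖ẽ(t)‖ + c′·(H₁·exp(−λ̂·t) + H₂·exp(−λ·t)) for all t ∈ [t_k, t_k + ε]. Then ‖ẽ(t)‖ ≤ γ·exp(−λ·t) for all t ∈ [t_k, t_k + ε]; that is, for any constant communication delay d ∈ [0, ε] the delayed model error remains below the relaxed threshold γ·exp(−λ·t) on the delay interval following each event. -/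

import Mathlib

/-!
By a Grönwall-type comparison, `‖ẽ‖` stays below the solution `B` of the scalar equation
`B' = a B + c′(H₁ e^{-λ̂ t} + H₂ e^{-λ t})` with `B(t_k) = β e^{-λ t_k}`, which is explicit:
`B(t) = (β + H₃) e^{-λ t_k} e^{a (t - t_k)} - P₁ e^{-λ̂ t} - P₂ e^{-λ t}` with
`P₁ = c′H₁/(a + λ̂)` and `P₂ = c′H₂/(a + λ)`. With `s = t - t_k` and `A = H₃ - P₂`,
`e^{λ t} B(t) = (β + H₃) e^{(a + λ) s} - A e^{-(λ̂ - λ) s} - P₂ ≤ (β + H₃) e^{(a + λ̂) s} - H₃`,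
and `ε` is exactly the largest `s` for which the right-hand side is at most `γ`.
-/
open Set Real

theorem image_norm_le_of_norm_deriv_right_le_linear_boundary {E : Type*} [NormedAddCommGroup E]
    [NormedSpace ℝ E] {f f' : ℝ → E} {B g : ℝ → ℝ} {a t₀ t₁ : ℝ}
    (hf : ContinuousOn f (Icc t₀ t₁)) (hf' : ∀ x ∈ Ico t₀ t₁, HasDerivWithinAt f (f' x) (Ici x) x)
    (hB : ContinuousOn B (Icc t₀ t₁))
    (hB' : ∀ x ∈ Ico t₀ t₁, HasDerivWithinAt B (a * B x + g x) (Ici x) x)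
    (h₀ : ‖f t₀‖ ≤ B t₀) (bound : ∀ x ∈ Ico t₀ t₁, ‖f' x‖ ≤ a * ‖f x‖ + g x) :
    ∀ ⦃x⦄, x ∈ Icc t₀ t₁ → ‖f x‖ ≤ B x := by
  intro x hx
  refine le_of_forall_pos_le_add fun δ hδ => ?_
  -- `B` plus a small solution of `u' = (a + 1) u` is a strict upper fence.
  set η := δ / exp ((a + 1) * (x - t₀))
  have hη : 0 < η := by positivity
  set u : ℝ → ℝ := fun y => η * exp ((a + 1) * (y - t₀))
  have hu : ∀ y, HasDerivAt u ((a + 1) * u y) y := fun y =>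
    ((((hasDerivAt_id y).sub_const t₀).const_mul (a + 1)).exp.const_mul η).congr_deriv
      (by simp only [u, id]; ring)
  have hfence := image_norm_le_of_norm_deriv_right_lt_deriv_boundary' hf hf'
    (B := B + u) (by simp only [Pi.add_apply, u, sub_self, mul_zero, exp_zero, mul_one]; linarith)
    (hB.add fun y _ => (hu y).continuousAt.continuousWithinAt)
    (fun y hy => (hB' y hy).add (hu y).hasDerivWithinAt) (fun y hy hfy => by
      have hu_pos : 0 < u y := by positivity
      have hbound := bound y hy
      rw [hfy, Pi.add_apply] at hbound
      linarith) hx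
  simpa [u, η, (exp_pos _).ne'] using hfence

theorem hasDerivAt_exp_fence (K a p μ q ν t₀ t : ℝ) :
    HasDerivAt (fun t => K * exp (a * (t - t₀)) - p * exp (-(μ * t)) - q * exp (-(ν * t)))
      (a * (K * exp (a * (t - t₀)) - p * exp (-(μ * t)) - q * exp (-(ν * t)))
        + ((a + μ) * p * exp (-(μ * t)) + (a + ν) * q * exp (-(ν * t)))) t := by
  have hshift : HasDerivAt (fun t => exp (a * (t - t₀))) (a * exp (a * (t - t₀))) t :=
    (((hasDerivAt_id t).sub_const t₀).const_mul a).exp.congr_deriv (by simp only [id]; ring)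
  have hdecay : ∀ c, HasDerivAt (fun t => exp (-(c * t))) (-c * exp (-(c * t))) t :=
    fun c => ((hasDerivAt_id t).const_mul c).neg.exp.congr_deriv
      (by simp only [id, Pi.neg_apply]; ring)
  exact (((hshift.const_mul K).sub ((hdecay μ).const_mul p)).sub
    ((hdecay ν).const_mul q)).congr_deriv (by ring)

theorem sub_mul_exp_neg_le_mul_exp_add_sub {A M x y : ℝ} (hA : 0 ≤ A) (hAM : A ≤ M)
    (hx : 0 ≤ x) (hy : 0 ≤ y) : M * exp y - A * exp (-x) ≤ M * exp (y + x) - A := by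
  have hM : 0 ≤ M := hA.trans hAM
  have key : A * (1 - exp (-x)) ≤ M * exp y * (exp x - 1) := calc
    A * (1 - exp (-x)) ≤ A * x := by gcongr; linarith [add_one_le_exp (-x)]
    _ ≤ M * x := by gcongr
    _ ≤ M * (exp x - 1) := by gcongr; linarith [add_one_le_exp x]
    _ ≤ M * (exp x - 1) * exp y :=
      le_mul_of_one_le_right (mul_nonneg hM (by linarith [add_one_le_exp x])) (one_le_exp hy)
    _ = M * exp y * (exp x - 1) := by ring
  rw [exp_add]
  linarith

theorem mul_exp_mul_le_of_le_log_div {k M N s : ℝ} (hk : 0 < k) (hM : 0 < M) (hN : 0 < N)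
    (hs : s ≤ log (N / M) / k) : M * exp (k * s) ≤ N := by
  have : exp (k * s) ≤ N / M := by
    rw [← exp_log (div_pos hN hM), exp_le_exp, mul_comm]
    exact (le_div_iff₀ hk).mp hs
  rwa [le_div_iff₀' hM] at this

theorem exp_fence_le_threshold {a μ ν β γ p q H t₀ t : ℝ} (hνμ : ν ≤ μ) (haν : 0 ≤ a + ν)
    (hβ : 0 ≤ β) (hp : 0 ≤ p) (hq : 0 ≤ q) (hH : H = p * exp ((ν - μ) * t₀) + q)
    (ht : t₀ ≤ t) (hγ : (β + H) * exp ((a + μ) * (t - t₀)) ≤ γ + H) :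
    (β + H) * exp (-(ν * t₀)) * exp (a * (t - t₀)) - p * exp (-(μ * t)) - q * exp (-(ν * t))
      ≤ γ * exp (-(ν * t)) := by
  set A := p * exp ((ν - μ) * t₀)
  have hA : 0 ≤ A := by positivity
  have e₁ : exp (-(ν * t₀)) * exp (a * (t - t₀)) = exp (-(ν * t)) * exp ((a + ν) * (t - t₀)) := by
    rw [← exp_add, ← exp_add]; ring_nf
  have e₂ : exp (-(μ * t))
      = exp (-(ν * t)) * (exp ((ν - μ) * t₀) * exp (-((μ - ν) * (t - t₀)))) := by
    rw [← exp_add, ← exp_add]; ring_nf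
  have key := sub_mul_exp_neg_le_mul_exp_add_sub hA (by linarith : A ≤ β + H)
    (mul_nonneg (sub_nonneg.2 hνμ) (sub_nonneg.2 ht)) (mul_nonneg haν (sub_nonneg.2 ht))
  rw [show (a + ν) * (t - t₀) + (μ - ν) * (t - t₀) = (a + μ) * (t - t₀) by ring] at key
  calc (β + H) * exp (-(ν * t₀)) * exp (a * (t - t₀)) - p * exp (-(μ * t)) - q * exp (-(ν * t))
      = exp (-(ν * t))
          * ((β + H) * exp ((a + ν) * (t - t₀)) - A * exp (-((μ - ν) * (t - t₀))) - q) := by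
        rw [mul_assoc, e₁, e₂]; ring
    _ ≤ exp (-(ν * t)) * γ := by gcongr; linarith
    _ = γ * exp (-(ν * t)) := mul_comm _ _

theorem stmt14_general (n : ℕ) (a c' H₁ H₂ lamhat lam γ β tk : ℝ)
    (ha : 0 ≤ a) (hc' : 0 ≤ c') (hH₁ : 0 ≤ H₁) (hH₂ : 0 ≤ H₂)
    (hlam : 0 < lam) (hlamlt : lam < lamhat) (hβ : 0 < β) (hγβ : β < γ)
    (H₃ : ℝ)
    (hH₃def : H₃ = c' * (H₁ * Real.exp ((lam - lamhat) * tk) / (a + lamhat) + H₂ / (a + lam)))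
    (ε : ℝ) (hεdef : ε = Real.log ((γ + H₃) / (β + H₃)) / (a + lamhat))
    (e e' : ℝ → EuclideanSpace ℝ (Fin n))
    (hderiv : ∀ t ∈ Set.Icc tk (tk + ε), HasDerivWithinAt e (e' t) (Set.Icc tk (tk + ε)) t)
    (h0 : ‖e tk‖ ≤ β * Real.exp (-(lam * tk)))
    (hbnd : ∀ t ∈ Set.Icc tk (tk + ε),
      ‖e' t‖ ≤ a * ‖e t‖ + c' * (H₁ * Real.exp (-(lamhat * t)) + H₂ * Real.exp (-(lam * t)))) :
    ∀ t ∈ Set.Icc tk (tk + ε), ‖e t‖ ≤ γ * Real.exp (-(lam * t)) := by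
  have hlamhat : 0 < a + lamhat := by linarith
  have hlam' : 0 < a + lam := by linarith
  set P₁ := c' * H₁ / (a + lamhat)
  set P₂ := c' * H₂ / (a + lam)
  have hP₁ : 0 ≤ P₁ := by positivity
  have hP₂ : 0 ≤ P₂ := by positivity
  have hP₁rate : (a + lamhat) * P₁ = c' * H₁ := mul_div_cancel₀ _ hlamhat.ne'
  have hP₂rate : (a + lam) * P₂ = c' * H₂ := mul_div_cancel₀ _ hlam'.ne'
  have hH₃ : H₃ = P₁ * exp ((lam - lamhat) * tk) + P₂ := by rw [hH₃def]; ring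
  have hH₃nonneg : 0 ≤ H₃ := by rw [hH₃]; positivity
  set B := fun t => (β + H₃) * exp (-(lam * tk)) * exp (a * (t - tk))
    - P₁ * exp (-(lamhat * t)) - P₂ * exp (-(lam * t))
  have hB : ∀ t, HasDerivAt B
      (a * B t + c' * (H₁ * exp (-(lamhat * t)) + H₂ * exp (-(lam * t)))) t := fun t =>
    (hasDerivAt_exp_fence _ a P₁ lamhat P₂ lam tk t).congr_deriv (by rw [hP₁rate, hP₂rate]; ring)
  have hB₀ : B tk = β * exp (-(lam * tk)) := by
    have hsplit : exp (-(lamhat * tk)) = exp ((lam - lamhat) * tk) * exp (-(lam * tk)) := by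
      rw [← exp_add]; ring_nf
    simp only [B, hH₃, hsplit, sub_self, mul_zero, exp_zero]; ring
  have hεbound : ∀ t ∈ Icc tk (tk + ε),
      (β + H₃) * exp ((a + lamhat) * (t - tk)) ≤ γ + H₃ := fun t ht =>
    mul_exp_mul_le_of_le_log_div hlamhat (by linarith) (by linarith)
      (by rw [← hεdef]; linarith [ht.2])
  have hgronwall := image_norm_le_of_norm_deriv_right_le_linear_boundary
    (fun t ht => (hderiv t ht).continuousWithinAt)
    (fun t ht => (hderiv t (Ico_subset_Icc_self ht)).mono_of_mem_nhdsWithin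
      (Icc_mem_nhdsGE_of_mem ht))
    (fun t _ => (hB t).continuousAt.continuousWithinAt) (fun t _ => (hB t).hasDerivWithinAt)
    (hB₀ ▸ h0) (fun t ht => hbnd t (Ico_subset_Icc_self ht))
  exact fun t ht => (hgronwall ht).trans <| exp_fence_le_threshold hlamlt.le hlam'.le hβ.le
    hP₁ hP₂ hH₃ ht.1 (hεbound t ht)

/-- Admissible delay: with `H₃ = c′(H₁ e^{(λ-λ̂)t_k}/(a+λ̂) + H₂/(a+λ))` and
`ε = ln((γ+H₃)/(β+H₃))/(a+λ̂)`, if the auxiliary delayed-model error `ẽ` satisfies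
`‖ẽ(t_k)‖ ≤ β e^{-λ t_k}` and `‖ẽ′(t)‖ ≤ a‖ẽ(t)‖ + c′(H₁ e^{-λ̂ t} + H₂ e^{-λ t})` on
`[t_k, t_k + ε]`, then `‖ẽ(t)‖ ≤ γ e^{-λ t}` for all `t ∈ [t_k, t_k + ε]`: the delayed model
error remains below the relaxed threshold `γ e^{-λ t}` for any delay `d ∈ [0, ε]`. -/
theorem stmt14 (n : ℕ) (hn : 0 < n) (a c' H₁ H₂ lamhat lam γ β tk : ℝ)
    (ha : 0 ≤ a) (hc' : 0 ≤ c') (hH₁ : 0 ≤ H₁) (hH₂ : 0 ≤ H₂)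
    (hlam : 0 < lam) (hlamlt : lam < lamhat) (hβ : 0 < β) (hγβ : β < γ) (htk : 0 ≤ tk)
    (H₃ : ℝ)
    (hH₃def : H₃ = c' * (H₁ * Real.exp ((lam - lamhat) * tk) / (a + lamhat) + H₂ / (a + lam)))
    (ε : ℝ) (hεdef : ε = Real.log ((γ + H₃) / (β + H₃)) / (a + lamhat))
    (e e' : ℝ → EuclideanSpace ℝ (Fin n))
    (hderiv : ∀ t ∈ Set.Icc tk (tk + ε), HasDerivWithinAt e (e' t) (Set.Icc tk (tk + ε)) t)
    (h0 : ‖e tk‖ ≤ β * Real.exp (-(lam * tk)))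
    (hbnd : ∀ t ∈ Set.Icc tk (tk + ε),
      ‖e' t‖ ≤ a * ‖e t‖ + c' * (H₁ * Real.exp (-(lamhat * t)) + H₂ * Real.exp (-(lam * t)))) :
    ∀ t ∈ Set.Icc tk (tk + ε), ‖e t‖ ≤ γ * Real.exp (-(lam * t)) :=
  stmt14_general n a c' H₁ H₂ lamhat lam γ β tk ha hc' hH₁ hH₂ hlam hlamlt hβ hγβ H₃ hH₃def ε hεdef
    e e' hderiv h0 hbnd
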